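/- arXiv:1907.13578 — 6 statements merged into one kernel-verified Lean document; each statement's English description precedes it below -/
import Mathlib

section
/- Let (X,d) be an infinite metric space and 𝔅 a bornology on X with closed base such that X ∉ 𝔅. If 𝒰 = {Uₙ : n ∈ ℕ} is an open 𝔅ˢ-cover of X, then for every B ∈ 𝔅 there exist infinitely many n ∈ ℕ for which there is δₙ > 0 with B^{δₙ} ⊆ Uₙ. -/
open Set Metric Filter

/-- A bornology on a metric space: an ideal of subsets covering `X`. -/
structure BornologyOn (X : Type*) [MetricSpace X] where
  sets : Set (Set X)
  union_mem : ∀ {A B : Set X}, A ∈ sets → B ∈ sets → A ∪ B ∈ sets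
  subset_mem : ∀ {A B : Set X}, A ∈ sets → B ⊆ A → B ∈ sets
  covers : ∀ x : X, ∃ A ∈ sets, x ∈ A

variable {X : Type*} [MetricSpace X]

/-- `𝔅` has a closed base: a cofinal subfamily consisting of closed sets. -/
def HasClosedBase (𝔅 : BornologyOn X) : Prop :=
  ∃ base ⊆ 𝔅.sets, (∀ C ∈ base, IsClosed C) ∧ ∀ A ∈ 𝔅.sets, ∃ C ∈ base, A ⊆ C

/-- The `δ`-enlargement `B^δ = ⋃_{x ∈ B} S(x, δ)`. -/
def enlarge (B : Set X) (δ : ℝ) : Set X := ⋃ x ∈ B, ball x δ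

/-- A `𝔅ˢ`-cover: `X ∉ 𝒰` and every `B ∈ 𝔅` has `B^δ ⊆ U` for some `U ∈ 𝒰`, `δ > 0`. -/
def IsBCover (𝔅 : BornologyOn X) (𝒰 : Set (Set X)) : Prop :=
  univ ∉ 𝒰 ∧ ∀ B ∈ 𝔅.sets, ∃ U ∈ 𝒰, ∃ δ > 0, enlarge B δ ⊆ U

/-- An open `𝔅ˢ`-cover. -/
def IsOpenBCover (𝔅 : BornologyOn X) (𝒰 : Set (Set X)) : Prop :=
  (∀ U ∈ 𝒰, IsOpen U) ∧ (∀ x : X, ∃ U ∈ 𝒰, x ∈ U) ∧ IsBCover 𝔅 𝒰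

/-- A `γ_{𝔅ˢ}`-cover (set form): infinite family of open sets such that for each `B ∈ 𝔅`
all but finitely many members contain some enlargement of `B`. -/
def IsGammaBCover (𝔅 : BornologyOn X) (𝒰 : Set (Set X)) : Prop :=
  𝒰.Infinite ∧ (∀ U ∈ 𝒰, IsOpen U) ∧
    ∀ B ∈ 𝔅.sets, {U ∈ 𝒰 | ¬ ∃ δ > 0, enlarge B δ ⊆ U}.Finite

/-- A `γ_{𝔅ˢ}`-cover given as a sequence `{Uₙ}`: infinite, open, and for each `B ∈ 𝔅`
there are `n₀` and `δₙ > 0` with `B^{δₙ} ⊆ Uₙ` for all `n ≥ n₀`. -/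
def IsGammaBSeq (𝔅 : BornologyOn X) (U : ℕ → Set X) : Prop :=
  (Set.range U).Infinite ∧ (∀ n, IsOpen (U n)) ∧
    ∀ B ∈ 𝔅.sets, ∃ n₀, ∀ n ≥ n₀, ∃ δ > 0, enlarge B δ ⊆ U n

/-- A `γ`-cover: infinite family of open sets, every point in all but finitely many members. -/
def IsGammaCover (𝒰 : Set (Set X)) : Prop :=
  𝒰.Infinite ∧ (∀ U ∈ 𝒰, IsOpen U) ∧ ∀ x : X, {U ∈ 𝒰 | x ∉ U}.Finite

/-- An open cover of `X`. -/
def IsOpenCover (𝒰 : Set (Set X)) : Prop :=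
  (∀ U ∈ 𝒰, IsOpen U) ∧ ∀ x : X, ∃ U ∈ 𝒰, x ∈ U

/-- The family `𝒪_{𝔅ˢ}` of countable open `𝔅ˢ`-covers. -/
def OBs (𝔅 : BornologyOn X) : Set (Set (Set X)) :=
  {𝒰 | 𝒰.Countable ∧ IsOpenBCover 𝔅 𝒰}

/-- The family `Γ_{𝔅ˢ}` of countable `γ_{𝔅ˢ}`-covers. -/
def GBs (𝔅 : BornologyOn X) : Set (Set (Set X)) :=
  {𝒰 | 𝒰.Countable ∧ IsGammaBCover 𝔅 𝒰}

/-- The family `𝒪` of countable open covers. -/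
def Ocov (X : Type*) [MetricSpace X] : Set (Set (Set X)) :=
  {𝒰 | 𝒰.Countable ∧ IsOpenCover 𝒰}

/-- The selection principle `S₁(𝒜, ℬ)`. -/
def S1 (𝒜 ℬ : Set (Set (Set X))) : Prop :=
  ∀ 𝒰 : ℕ → Set (Set X), (∀ n, 𝒰 n ∈ 𝒜) →
    ∃ sel : ℕ → Set X, (∀ n, sel n ∈ 𝒰 n) ∧ Set.range sel ∈ ℬ

/-- The selection principle `S_fin(𝒜, ℬ)`. -/
def Sfin (𝒜 ℬ : Set (Set (Set X))) : Prop :=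
  ∀ 𝒰 : ℕ → Set (Set X), (∀ n, 𝒰 n ∈ 𝒜) →
    ∃ 𝒱 : ℕ → Set (Set X), (∀ n, 𝒱 n ⊆ 𝒰 n ∧ (𝒱 n).Finite) ∧ (⋃ n, 𝒱 n) ∈ ℬ

/-- The selection principle `U_fin(𝒜, ℬ)`. -/
def Ufin (𝒜 ℬ : Set (Set (Set X))) : Prop :=
  ∀ 𝒰 : ℕ → Set (Set X), (∀ n, 𝒰 n ∈ 𝒜) →
    ∃ 𝒱 : ℕ → Set (Set X), (∀ n, 𝒱 n ⊆ 𝒰 n ∧ (𝒱 n).Finite) ∧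
      ((Set.range fun n => ⋃₀ 𝒱 n) ∈ ℬ ∨ ∃ n, ⋃₀ 𝒱 n = univ)

/-- ONE has a winning strategy in `G₁(𝒜, ℬ)`. -/
def OneWinsG1 (𝒜 ℬ : Set (Set (Set X))) : Prop :=
  ∃ σ : List (Set X) → Set (Set X),
    (∀ h, σ h ∈ 𝒜) ∧
    ∀ play : ℕ → Set X,
      (∀ n, play n ∈ σ (List.ofFn fun i : Fin n => play i.1)) →
      Set.range play ∉ ℬ

/-- ONE has a winning strategy in `G_fin(𝒜, ℬ)`. -/
def OneWinsGfin (𝒜 ℬ : Set (Set (Set X))) : Prop :=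
  ∃ σ : List (Set (Set X)) → Set (Set X),
    (∀ h, σ h ∈ 𝒜) ∧
    ∀ play : ℕ → Set (Set X),
      (∀ n, play n ⊆ σ (List.ofFn fun i : Fin n => play i.1) ∧ (play n).Finite) →
      (⋃ n, play n) ∉ ℬ

/-- The winning condition in the `𝔅ˢ`-Hurewicz game / property: every `B ∈ 𝔅` is
eventually `δ`-enlarged into some member of `𝒱ₙ`. -/
def HurSel (𝔅 : BornologyOn X) (𝒱 : ℕ → Set (Set X)) : Prop :=
  ∀ B ∈ 𝔅.sets, ∃ n₀, ∀ n ≥ n₀, ∃ δ > 0, ∃ U ∈ 𝒱 n, enlarge B δ ⊆ U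

/-- The strong `𝔅`-Hurewicz property. -/
def BsHurewicz (𝔅 : BornologyOn X) : Prop :=
  ∀ 𝒰 : ℕ → Set (Set X), (∀ n, 𝒰 n ∈ OBs 𝔅) →
    ∃ 𝒱 : ℕ → Set (Set X), (∀ n, 𝒱 n ⊆ 𝒰 n ∧ (𝒱 n).Finite) ∧ HurSel 𝔅 𝒱

/-- ONE has a winning strategy in the `𝔅ˢ`-Hurewicz game. -/
def OneWinsHurewicz (𝔅 : BornologyOn X) : Prop :=
  ∃ σ : List (Set (Set X)) → Set (Set X),
    (∀ h, σ h ∈ OBs 𝔅) ∧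
    ∀ play : ℕ → Set (Set X),
      (∀ n, play n ⊆ σ (List.ofFn fun i : Fin n => play i.1) ∧ (play n).Finite) →
      ¬ HurSel 𝔅 play

/-- A `𝔅ˢ`-groupable cover. -/
def BsGroupable (𝔅 : BornologyOn X) (𝒰 : Set (Set X)) : Prop :=
  ∃ 𝒢 : ℕ → Set (Set X), (∀ n, (𝒢 n).Finite) ∧
    (∀ m n, m ≠ n → Disjoint (𝒢 m) (𝒢 n)) ∧ (⋃ n, 𝒢 n) = 𝒰 ∧ HurSel 𝔅 𝒢

/-- The family `𝒪_{𝔅ˢ}^{gp}` of `𝔅ˢ`-groupable open covers. -/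
def OBsgp (𝔅 : BornologyOn X) : Set (Set (Set X)) :=
  {𝒰 | IsOpenCover 𝒰 ∧ BsGroupable 𝔅 𝒰}

/-- The basic `τ_𝔅ˢ` neighbourhood `[B, ε]ˢ(f)` in `C(X)`. -/
def sball (f : C(X, ℝ)) (B : Set X) (ε : ℝ) : Set C(X, ℝ) :=
  {g | ∃ δ > 0, ∀ x ∈ enlarge B δ, |f x - g x| < ε}

/-- The topology `τ_𝔅ˢ` of strong uniform convergence on `𝔅` on `C(X)`. -/
def tauBs (𝔅 : BornologyOn X) : TopologicalSpace C(X, ℝ) :=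
  TopologicalSpace.generateFrom
    {S | ∃ f : C(X, ℝ), ∃ B ∈ 𝔅.sets, ∃ ε > 0, S = sball f B ε}

/-- Countable `T`-tightness of a topological space. -/
def CountableTTightness {Y : Type*} (t : TopologicalSpace Y) : Prop :=
  ∀ ρ : Cardinal.{0}, ρ.IsRegular → Cardinal.aleph0 < ρ →
    ∀ A : Ordinal.{0} → Set Y, (∀ α β, α ≤ β → A α ⊆ A β) →
      (∀ α, α < ρ.ord → @IsClosed _ t (A α)) →
      @IsClosed _ t (⋃ α ∈ {α | α < ρ.ord}, A α)

/-
Since `X ∉ 𝒰`, each `Uₙ` misses a point `xₙ`. If only finitely many `Uₙ` contained an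
enlargement of `B`, add to `B` the point `xₙ` for each such `n`. The resulting set is still in `𝔅`,
so it has an enlargement inside some `Uₘ`; then `m` is one of those finitely many indices,
yet `xₘ ∈ Uₘ`.
-/

namespace BornologyOn

variable (𝔅 : BornologyOn X)

theorem insert_mem {B : Set X} (hB : B ∈ 𝔅.sets) (x : X) : insert x B ∈ 𝔅.sets := by
  obtain ⟨A, hA, hxA⟩ := 𝔅.covers x
  rw [Set.insert_eq]
  exact 𝔅.union_mem (𝔅.subset_mem hA (Set.singleton_subset_iff.mpr hxA)) hB

theorem union_mem_of_finite {B F : Set X} (hB : B ∈ 𝔅.sets) (hF : F.Finite) :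
    B ∪ F ∈ 𝔅.sets := by
  induction F, hF using Set.Finite.induction_on with
  | empty => simpa using hB
  | insert _ _ ih =>
    rw [Set.union_insert]
    exact 𝔅.insert_mem ih _

end BornologyOn

theorem subset_enlarge {B : Set X} {δ : ℝ} (hδ : 0 < δ) : B ⊆ enlarge B δ :=
  fun _ hx => Set.mem_biUnion hx (mem_ball_self hδ)

theorem enlarge_mono {B C : Set X} (h : B ⊆ C) (δ : ℝ) : enlarge B δ ⊆ enlarge C δ :=
  Set.biUnion_subset_biUnion_left h

theorem IsBCover.infinite_setOf_enlarge_subset {𝔅 : BornologyOn X} {U : ℕ → Set X}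
    (hU : IsBCover 𝔅 (Set.range U)) {B : Set X} (hB : B ∈ 𝔅.sets) :
    {n : ℕ | ∃ δ > 0, enlarge B δ ⊆ U n}.Infinite := by
  intro hS
  have hproper : ∀ n, ∃ x, x ∉ U n := fun n =>
    not_forall.mp fun hn => hU.1 ⟨n, Set.eq_univ_of_forall hn⟩
  choose x hx using hproper
  set S := {n : ℕ | ∃ δ > 0, enlarge B δ ⊆ U n}
  obtain ⟨_, ⟨m, rfl⟩, δ, hδ, hsub⟩ :=
    hU.2 _ (𝔅.union_mem_of_finite hB (hS.image x))
  have hm : m ∈ S :=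
    ⟨δ, hδ, (enlarge_mono Set.subset_union_left δ).trans hsub⟩
  exact hx m (hsub (subset_enlarge hδ (Or.inr ⟨m, hm, rfl⟩)))

theorem stmt0_general (𝔅 : BornologyOn X) (U : ℕ → Set X)
    (hU : IsOpenBCover 𝔅 (Set.range U)) :
    ∀ B ∈ 𝔅.sets, {n : ℕ | ∃ δ > 0, enlarge B δ ⊆ U n}.Infinite :=
  fun _ hB => hU.2.2.infinite_setOf_enlarge_subset hB

theorem stmt0 [Infinite X] (𝔅 : BornologyOn X) (hcb : HasClosedBase 𝔅)
    (hX : Set.univ ∉ 𝔅.sets) (U : ℕ → Set X)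
    (hU : IsOpenBCover 𝔅 (Set.range U)) :
    ∀ B ∈ 𝔅.sets, {n : ℕ | ∃ δ > 0, enlarge B δ ⊆ U n}.Infinite :=
  stmt0_general 𝔅 U hU
end

section
/- Every γ_{𝔅ˢ}-cover of a metric space X (with bornology 𝔅 having closed base) is a γ-cover, but there exists a metric space X with a bornology 𝔅 with closed base and a γ-cover of X that is not a γ_{𝔅ˢ}-cover. Specifically, for X = ℝ with the Euclidean metric and 𝔅 the bornology generated by {(−∞,x) : x ∈ ℝ}, the cover {(−m,m) : m ∈ ℕ} is a γ-cover of ℝ but not a γ_{𝔅ˢ}-cover. -/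
open Set Metric Filter

variable {X : Type*} [MetricSpace X]

lemma mem_enlarge {B : Set X} {x : X} (hx : x ∈ B) {δ : ℝ} (hδ : 0 < δ) :
    x ∈ enlarge B δ := Set.mem_biUnion hx (mem_ball_self hδ)

lemma ioo_infinite :
    ({U : Set ℝ | ∃ m : ℕ, U = Set.Ioo (-(m : ℝ)) (m : ℝ)}).Infinite := by
  have hr : {U : Set ℝ | ∃ m : ℕ, U = Set.Ioo (-(m : ℝ)) (m : ℝ)} =
      Set.range (fun m : ℕ => Set.Ioo (-(m : ℝ)) (m : ℝ)) := by
    ext U; simp [eq_comm, Set.mem_range]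
  rw [hr]
  apply Set.infinite_range_of_injective
  intro a b hab
  have hab' : Set.Ioo (-(a : ℝ)) (a : ℝ) = Set.Ioo (-(b : ℝ)) (b : ℝ) := hab
  by_contra hne
  wlog h : a < b generalizing a b
  · exact this hab.symm hab'.symm (Ne.symm hne) (by omega)
  have hb : (a : ℝ) ∈ Set.Ioo (-(b : ℝ)) (b : ℝ) := by
    have h1 : (a : ℝ) < b := by exact_mod_cast h
    have h2 : (0 : ℝ) ≤ a := Nat.cast_nonneg a
    exact ⟨by linarith, h1⟩
  rw [← hab'] at hb
  exact absurd hb.2 (lt_irrefl _)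

theorem stmt2 :
    (∀ (X : Type*) [MetricSpace X] (𝔅 : BornologyOn X), HasClosedBase 𝔅 →
      ∀ 𝒰 : Set (Set X), IsGammaBCover 𝔅 𝒰 → IsGammaCover 𝒰) ∧
    ∀ 𝔅 : BornologyOn ℝ, 𝔅.sets = {A : Set ℝ | ∃ x : ℝ, A ⊆ Set.Iio x} →
      HasClosedBase 𝔅 ∧
        IsGammaCover {U : Set ℝ | ∃ m : ℕ, U = Set.Ioo (-(m : ℝ)) (m : ℝ)} ∧
        ¬ IsGammaBCover 𝔅 {U : Set ℝ | ∃ m : ℕ, U = Set.Ioo (-(m : ℝ)) (m : ℝ)} := by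
  constructor
  · intro X _ 𝔅 _ 𝒰 h
    obtain ⟨hinf, hopen, hB⟩ := h
    refine ⟨hinf, hopen, fun x => ?_⟩
    obtain ⟨B, hBs, hxB⟩ := 𝔅.covers x
    refine (hB B hBs).subset ?_
    rintro U ⟨hU, hxU⟩
    exact ⟨hU, fun ⟨δ, hδ, hsub⟩ => hxU (hsub (mem_enlarge hxB hδ))⟩
  · intro 𝔅 hsets
    refine ⟨⟨{C | ∃ x : ℝ, C = Set.Iic x}, ?_, ?_, ?_⟩, ⟨ioo_infinite, ?_, ?_⟩, ?_⟩
    · rintro C ⟨x, rfl⟩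
      rw [hsets]
      refine ⟨x + 1, fun y hy => ?_⟩
      simp only [Set.mem_Iic] at hy
      simp only [Set.mem_Iio]
      linarith
    · rintro C ⟨x, rfl⟩; exact isClosed_Iic
    · intro A hA
      rw [hsets] at hA
      obtain ⟨x, hx⟩ := hA
      exact ⟨Set.Iic x, ⟨x, rfl⟩, hx.trans Set.Iio_subset_Iic_self⟩
    · rintro U ⟨m, rfl⟩; exact isOpen_Ioo
    · intro x
      have hsub : {U ∈ {U : Set ℝ | ∃ m : ℕ, U = Set.Ioo (-(m : ℝ)) (m : ℝ)} | x ∉ U} ⊆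
          (fun m : ℕ => Set.Ioo (-(m : ℝ)) (m : ℝ)) '' Set.Iic (⌈|x|⌉₊ + 1) := by
        rintro U ⟨⟨m, rfl⟩, hxU⟩
        refine ⟨m, ?_, rfl⟩
        have hm : (m : ℝ) ≤ |x| := by
          by_contra hlt
          push_neg at hlt
          exact hxU ⟨(abs_lt.mp hlt).1, (abs_lt.mp hlt).2⟩
        exact le_trans (by exact_mod_cast le_trans hm (Nat.le_ceil _)) (Nat.le_succ _)
      exact ((Set.finite_Iic _).image _).subset hsub
    · rintro ⟨hinf, _, hB⟩
      have hB0 : Set.Iio (0 : ℝ) ∈ 𝔅.sets := by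
        rw [hsets]; exact ⟨0, subset_rfl⟩
      have hfin := hB _ hB0
      have heq : {U ∈ {U : Set ℝ | ∃ m : ℕ, U = Set.Ioo (-(m : ℝ)) (m : ℝ)} |
          ¬ ∃ δ > 0, enlarge (Set.Iio (0:ℝ)) δ ⊆ U} =
          {U : Set ℝ | ∃ m : ℕ, U = Set.Ioo (-(m : ℝ)) (m : ℝ)} := by
        ext U
        simp only [Set.mem_setOf_eq, Set.sep_setOf, and_iff_left_iff_imp]
        rintro ⟨m, rfl⟩ ⟨δ, hδ, hsub⟩
        have hmem : (-(m : ℝ) - 1) ∈ enlarge (Set.Iio (0:ℝ)) δ := by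
          apply mem_enlarge _ hδ
          simp only [Set.mem_Iio]
          have := Nat.cast_nonneg (α := ℝ) m
          linarith
        have := (hsub hmem).1
        linarith
      rw [heq] at hfin
      exact ioo_infinite hfin
end

section
/- Let 𝔅 be a bornology with closed base on a metric space X. Then X satisfies S_fin(𝒪_{𝔅ˢ}, 𝒪) if and only if X satisfies S_fin(Γ_{𝔅ˢ}, 𝒪). -/
open Set Metric Filter

variable {X : Type*} [MetricSpace X]

/-!
A `γ_{𝔅ˢ}`-cover that does not contain `X` is already an open `𝔅ˢ`-cover, which gives one
direction. Conversely, enumerate an open `𝔅ˢ`-cover as `U₀, U₁, …`: unless some finite subfamily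
covers `X` (when the selection is trivial), the partial unions `U₀ ∪ ⋯ ∪ Uₖ` form a
`γ_{𝔅ˢ}`-cover, since each `B^δ ⊆ Uⱼ` lies in all of them from `k = j` on. Finitely many
selected partial unions are covered by finitely many of the `Uⱼ`.
-/

theorem exists_subset_accumulate_of_subset_range {α : Type*} {f : ℕ → Set α}
    {𝒢 : Set (Set α)} (h𝒢 : 𝒢 ⊆ range (accumulate f)) (hfin : 𝒢.Finite) :
    ∃ K, ∀ V ∈ 𝒢, V ⊆ accumulate f K := by
  rw [← image_univ] at h𝒢
  obtain ⟨t, -, ht, rfl⟩ := exists_subset_image_finite_and.1 ⟨𝒢, h𝒢, hfin, rfl⟩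
  obtain ⟨K, hK⟩ := ht.bddAbove
  exact ⟨K, forall_mem_image.2 fun k hk => monotone_accumulate (hK hk)⟩

theorem accumulate_eq_sUnion_image_Iic {α : Type*} (f : ℕ → Set α) (K : ℕ) :
    accumulate f K = ⋃₀ (f '' Iic K) := by
  rw [sUnion_image, accumulate_def]
  rfl

theorem infinite_range_accumulate {α : Type*} {f : ℕ → Set α} (hcov : ⋃ n, f n = univ)
    (hnot : ∀ K, accumulate f K ≠ univ) : (range (accumulate f)).Infinite := by
  intro hfin
  obtain ⟨K, hK⟩ := exists_subset_accumulate_of_subset_range subset_rfl hfin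
  refine hnot K (eq_univ_of_univ_subset ?_)
  rw [← hcov, ← iUnion_accumulate]
  exact iUnion_subset fun k => hK _ (mem_range_self k)

theorem exists_finite_selection_of_finite_mem {α : Type*} {𝒰 : ℕ → Set (Set α)}
    {ℬ : Set (Set (Set α))} {n : ℕ} {F : Set (Set α)} (hF : F ⊆ 𝒰 n) (hFfin : F.Finite)
    (hFℬ : F ∈ ℬ) :
    ∃ 𝒱 : ℕ → Set (Set α), (∀ m, 𝒱 m ⊆ 𝒰 m ∧ (𝒱 m).Finite) ∧ (⋃ m, 𝒱 m) ∈ ℬ := by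
  refine ⟨fun m => ⋃ _ : m = n, F, fun m => ⟨iUnion_subset ?_, finite_iUnion fun _ => hFfin⟩, ?_⟩
  · rintro rfl
    exact hF
  · rwa [iUnion_iUnion_eq_left]

theorem finite_mem_Ocov {F : Set (Set X)} (hfin : F.Finite) (hopen : ∀ U ∈ F, IsOpen U)
    (hcov : ⋃₀ F = univ) : F ∈ Ocov X :=
  ⟨hfin.countable, hopen, fun x => mem_sUnion.1 (hcov.symm ▸ mem_univ x)⟩

theorem mem_Ocov_iUnion_of_refines {𝒢 𝒱 : ℕ → Set (Set X)} (h𝒢 : (⋃ n, 𝒢 n) ∈ Ocov X)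
    (hfin : ∀ n, (𝒱 n).Finite) (hopen : ∀ n, ∀ U ∈ 𝒱 n, IsOpen U)
    (hsub : ∀ n, ∀ V ∈ 𝒢 n, V ⊆ ⋃₀ 𝒱 n) : (⋃ n, 𝒱 n) ∈ Ocov X := by
  refine ⟨countable_iUnion fun n => (hfin n).countable, ?_, fun x => ?_⟩
  · simp only [mem_iUnion]
    rintro U ⟨n, hU⟩
    exact hopen n U hU
  · obtain ⟨V, hV, hxV⟩ := h𝒢.2.2 x
    obtain ⟨n, hVn⟩ := mem_iUnion.1 hV
    obtain ⟨U, hU, hxU⟩ := hsub n V hVn hxV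
    exact ⟨U, mem_iUnion.2 ⟨n, hU⟩, hxU⟩

variable {𝔅 : BornologyOn X} {𝒰 : Set (Set X)}

theorem IsBCover.exists_mem (h : IsBCover 𝔅 𝒰) (x : X) : ∃ U ∈ 𝒰, x ∈ U := by
  obtain ⟨B, hB, hxB⟩ := 𝔅.covers x
  obtain ⟨U, hU, δ, hδ, hsub⟩ := h.2 B hB
  exact ⟨U, hU, hsub (mem_biUnion hxB (mem_ball_self hδ))⟩

theorem IsGammaBCover.isBCover (h : IsGammaBCover 𝔅 𝒰) (huniv : univ ∉ 𝒰) :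
    IsBCover 𝔅 𝒰 := by
  refine ⟨huniv, fun B hB => ?_⟩
  obtain ⟨U, hU, hgood⟩ := (h.1.sdiff (h.2.2 B hB)).nonempty
  exact ⟨U, hU, not_not.1 fun hbad => hgood ⟨hU, hbad⟩⟩

theorem mem_OBs_of_mem_GBs (h : 𝒰 ∈ GBs 𝔅) (huniv : univ ∉ 𝒰) : 𝒰 ∈ OBs 𝔅 :=
  have hB := h.2.isBCover huniv
  ⟨h.1, h.2.2.1, hB.exists_mem, hB⟩

theorem mem_GBs_range_accumulate {f : ℕ → Set X} (hf : range f ∈ OBs 𝔅)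
    (hnot : ∀ K, accumulate f K ≠ univ) : range (accumulate f) ∈ GBs 𝔅 := by
  obtain ⟨-, hopen, hcov, -, hB⟩ := hf
  simp only [forall_mem_range, exists_range_iff] at hopen hB
  refine ⟨countable_range _, infinite_range_accumulate ?_ hnot, ?_, fun B hBmem => ?_⟩
  · exact eq_univ_of_forall fun x => by simpa using hcov x
  · exact forall_mem_range.2 fun k => isOpen_biUnion fun j _ => hopen j
  · obtain ⟨j, δ, hδ, hsub⟩ := hB B hBmem
    refine ((finite_Iio j).image (accumulate f)).subset ?_
    rintro _ ⟨⟨k, rfl⟩, hbad⟩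
    refine ⟨k, mem_Iio.2 (not_le.1 fun hjk => hbad ⟨δ, hδ, ?_⟩), rfl⟩
    exact hsub.trans (subset_accumulate.trans (monotone_accumulate hjk))

theorem mem_Ocov_of_mem_OBs (h : 𝒰 ∈ OBs 𝔅) : 𝒰 ∈ Ocov X :=
  ⟨h.1, h.2.1, h.2.2.1⟩

theorem Sfin.GBs_of_OBs (h : Sfin (OBs 𝔅) (Ocov X)) : Sfin (GBs 𝔅) (Ocov X) := by
  intro 𝒰 h𝒰
  by_cases huniv : ∃ n, univ ∈ 𝒰 n
  · obtain ⟨n, hn⟩ := huniv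
    exact exists_finite_selection_of_finite_mem (singleton_subset_iff.2 hn) (finite_singleton _)
      (finite_mem_Ocov (finite_singleton _) (by simp) (sUnion_singleton _))
  · push Not at huniv
    exact h 𝒰 fun n => mem_OBs_of_mem_GBs (h𝒰 n) (huniv n)

theorem Sfin.OBs_of_GBs (h : Sfin (GBs 𝔅) (Ocov X)) : Sfin (OBs 𝔅) (Ocov X) := by
  intro 𝒰 h𝒰
  by_cases hfin : ∃ n, ∃ F ⊆ 𝒰 n, F.Finite ∧ F ∈ Ocov X
  · obtain ⟨n, F, hF, hFfin, hFcov⟩ := hfin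
    exact exists_finite_selection_of_finite_mem hF hFfin hFcov
  push Not at hfin
  have hne (n : ℕ) : (𝒰 n).Nonempty := by
    by_contra hempty
    rw [not_nonempty_iff_eq_empty] at hempty
    exact hfin n (𝒰 n) subset_rfl (hempty ▸ finite_empty) (mem_Ocov_of_mem_OBs (h𝒰 n))
  choose f hf using fun n => (h𝒰 n).1.exists_eq_range (hne n)
  have hsel (n K : ℕ) : f n '' Iic K ⊆ 𝒰 n := hf n ▸ image_subset_range _ _
  have hopen (n K : ℕ) : ∀ U ∈ f n '' Iic K, IsOpen U := fun U hU => (h𝒰 n).2.1 U (hsel n K hU)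
  have hnot (n K : ℕ) : accumulate (f n) K ≠ univ := fun hK =>
    hfin n _ (hsel n K) ((finite_Iic K).image _)
      (finite_mem_Ocov ((finite_Iic K).image _) (hopen n K)
        (accumulate_eq_sUnion_image_Iic (f n) K ▸ hK))
  obtain ⟨𝒢, h𝒢, h𝒢cov⟩ := h (fun n => range (accumulate (f n)))
    fun n => mem_GBs_range_accumulate (hf n ▸ h𝒰 n) (hnot n)
  choose K hK using fun n => exists_subset_accumulate_of_subset_range (h𝒢 n).1 (h𝒢 n).2
  refine ⟨fun n => f n '' Iic (K n), fun n => ⟨hsel n (K n), (finite_Iic _).image _⟩,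
    mem_Ocov_iUnion_of_refines h𝒢cov (fun n => (finite_Iic _).image _) (fun n => hopen n (K n))
      fun n V hV => accumulate_eq_sUnion_image_Iic (f n) (K n) ▸ hK n V hV⟩

theorem stmt9_general (𝔅 : BornologyOn X) :
    Sfin (OBs 𝔅) (Ocov X) ↔ Sfin (GBs 𝔅) (Ocov X) :=
  ⟨Sfin.GBs_of_OBs, Sfin.OBs_of_GBs⟩

theorem stmt9 (𝔅 : BornologyOn X) (hcb : HasClosedBase 𝔅) :
    Sfin (OBs 𝔅) (Ocov X) ↔ Sfin (GBs 𝔅) (Ocov X) :=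
  stmt9_general 𝔅
end

section
/- Let 𝔅 be a bornology with closed base on a metric space X. Then X satisfies S₁(Γ_{𝔅ˢ}, Γ_{𝔅ˢ}) if and only if player ONE has no winning strategy in the game G₁(Γ_{𝔅ˢ}, Γ_{𝔅ˢ}). -/
open Set Metric Filter

variable {X : Type*} [MetricSpace X]

/-- Removing a finite family from a `γ_{𝔅ˢ}`-cover keeps it a `γ_{𝔅ˢ}`-cover. -/
theorem diff_mem_GBs {𝔅 : BornologyOn X} {𝒰 F : Set (Set X)} (h𝒰 : 𝒰 ∈ GBs 𝔅)
    (hF : F.Finite) : 𝒰 \ F ∈ GBs 𝔅 := by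
  obtain ⟨hc, hinf, hop, hbad⟩ := h𝒰
  exact ⟨hc.mono diff_subset, hinf.diff hF, fun U hU => hop U hU.1,
    fun B hB => (hbad B hB).subset (fun U hU => ⟨hU.1.1, hU.2⟩)⟩

/-- An infinite subfamily of a `γ_{𝔅ˢ}`-cover is a `γ_{𝔅ˢ}`-cover. -/
theorem subset_mem_GBs {𝔅 : BornologyOn X} {𝒰 𝒱 : Set (Set X)} (h𝒰 : 𝒰 ∈ GBs 𝔅)
    (h : 𝒱 ⊆ 𝒰) (hinf : 𝒱.Infinite) : 𝒱 ∈ GBs 𝔅 := by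
  obtain ⟨hc, _, hop, hbad⟩ := h𝒰
  exact ⟨hc.mono h, hinf, fun U hU => hop U (h hU),
    fun B hB => (hbad B hB).subset (fun U hU => ⟨h hU.1, hU.2⟩)⟩

theorem stmt11 (𝔅 : BornologyOn X) (hcb : HasClosedBase 𝔅) :
    S1 (GBs 𝔅) (GBs 𝔅) ↔ ¬ OneWinsG1 (GBs 𝔅) (GBs 𝔅) := by
  classical
  constructor
  · rintro hS1 ⟨σ, hσ, hwin⟩
    -- choose an enumeration of each move of ONE
    have hen : ∀ h : List (Set X), ∃ e : ℕ → Set X, σ h = Set.range e := fun h =>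
      (hσ h).1.exists_eq_range (hσ h).2.1.nonempty
    choose e he using hen
    -- histories of moves of TWO indexed by finite sequences of naturals (latest first)
    let M : List ℕ → List (Set X) := fun s =>
      s.reverse.foldl (fun h k => h ++ [e h k]) []
    have hMnil : M [] = [] := rfl
    have hMcons : ∀ k s, M (k :: s) = M s ++ [e (M s) k] := by
      intro k s
      simp only [M, List.reverse_cons, List.foldl_append, List.foldl_cons, List.foldl_nil]
    -- the covers at each node, with history elements removed
    let cover : List ℕ → Set (Set X) := fun s => σ (M s) \ {U | U ∈ M s}
    have hcov : ∀ s, cover s ∈ GBs 𝔅 := fun s =>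
      diff_mem_GBs (hσ (M s)) (List.finite_toSet (M s))
    let eqv : ℕ ≃ List ℕ := (Denumerable.eqv (List ℕ)).symm
    obtain ⟨sel, hsel, hrange⟩ := hS1 (fun n => cover (eqv n)) (fun n => hcov _)
    set V : List ℕ → Set X := fun s => sel (eqv.symm s) with hVdef
    have hV : ∀ s, V s ∈ cover s := by
      intro s
      have := hsel (eqv.symm s)
      simpa [hVdef] using this
    -- each selected set occurs in the enumeration of the corresponding move of ONE
    have hk : ∀ s, ∃ k, e (M s) k = V s := by
      intro s
      have : V s ∈ σ (M s) := (hV s).1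
      rw [he (M s)] at this
      exact this
    choose K hK using hk
    -- the branch followed by TWO
    let br : ℕ → List ℕ := fun n => Nat.rec [] (fun _ s => K s :: s) n
    have hbr : ∀ n, br (n + 1) = K (br n) :: br n := fun n => rfl
    set play : ℕ → Set X := fun n => V (br n) with hplaydef
    have hM : ∀ n, M (br n) = List.ofFn (fun i : Fin n => play i.1) := by
      intro n
      induction n with
      | zero => exact hMnil
      | succ n ih =>
          rw [hbr, hMcons, hK, ih, List.ofFn_succ']
          simp [hplaydef]
    have hlegal : ∀ n, play n ∈ σ (List.ofFn fun i : Fin n => play i.1) := by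
      intro n
      rw [← hM n]
      exact (hV (br n)).1
    -- the played sets are pairwise distinct
    have hne : ∀ m n, m < n → play m ≠ play n := by
      intro m n hmn hEq
      have h1 : play n ∉ {U | U ∈ M (br n)} := (hV (br n)).2
      apply h1
      rw [hM n]
      simp only [Set.mem_setOf_eq, List.mem_ofFn]
      exact ⟨⟨m, hmn⟩, hEq⟩
    have hinj : Function.Injective play := by
      intro a b hab
      by_contra hne'
      rcases lt_or_gt_of_ne hne' with h | h
      · exact hne a b h hab
      · exact hne b a h hab.symm
    have hsub : Set.range play ⊆ Set.range sel := by
      rintro U ⟨n, rfl⟩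
      exact ⟨eqv.symm (br n), rfl⟩
    exact hwin play hlegal
      (subset_mem_GBs hrange hsub (Set.infinite_range_of_injective hinj))
  · intro hno 𝒰 h𝒰
    by_contra hcon
    push_neg at hcon
    apply hno
    refine ⟨fun h => 𝒰 h.length, fun h => h𝒰 _, fun play hplay hrange => ?_⟩
    have hmem : ∀ n, play n ∈ 𝒰 n := by
      intro n
      have := hplay n
      simpa using this
    exact hcon play hmem hrange
end

section
/- Let 𝔅 be a bornology with closed base on a metric space X. Then X has the 𝔅ˢ-Hurewicz property if and only if ONE has no winning strategy in the 𝔅ˢ-Hurewicz game on X. -/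
/-!
A strategy of ONE with countable moves admits only countably many legal finite histories.
Enumerating them and feeding the corresponding countable covers to the Hurewicz property gives
finite selections `𝒱ₖ`; TWO answers each history by the selection attached to its index. The
histories met along this play are pairwise distinct, so their indices tend to infinity, and a
reindexing along such a sequence preserves the Hurewicz winning condition. Conversely, if ONE has
no winning strategy, the strategy that ignores the history and plays `𝒰ₙ` in round `n` is beaten
by some play, which is the required selection.
-/

open Set Metric Filter

variable {X : Type*} [MetricSpace X]

section FiniteSelectionGame

variable {β : Type*}

def legalHistories (σ : List (Set β) → Set β) : ℕ → Set (List (Set β))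
  | 0 => {[]}
  | n + 1 => ⋃ t ∈ legalHistories σ n, (fun v => t ++ [v]) '' {v | v ⊆ σ t ∧ v.Finite}

lemma countable_legalHistories {σ : List (Set β) → Set β} (hσ : ∀ t, (σ t).Countable) (n : ℕ) :
    (legalHistories σ n).Countable := by
  induction n with
  | zero => exact countable_singleton _
  | succ n ih =>
    refine ih.biUnion fun t _ => ((countable_ofPred_finite_subset (hσ t)).mono ?_).image _
    exact fun v hv => ⟨hv.2, hv.1⟩

def responseHistory (f : List (Set β) → Set β) : ℕ → List (Set β)
  | 0 => []
  | n + 1 => responseHistory f n ++ [f (responseHistory f n)]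

lemma length_responseHistory (f : List (Set β) → Set β) (n : ℕ) :
    (responseHistory f n).length = n := by
  induction n with
  | zero => rfl
  | succ n ih => simp [responseHistory, ih]

lemma ofFn_responseHistory (f : List (Set β) → Set β) (n : ℕ) :
    (List.ofFn fun i : Fin n => f (responseHistory f i)) = responseHistory f n := by
  induction n with
  | zero => rfl
  | succ n ih =>
    simp only [List.ofFn_succ', List.concat_eq_append, Fin.val_castSucc, Fin.val_last, ih,
      responseHistory]

lemma responseHistory_mem_legalHistories {σ : List (Set β) → Set β} {f : List (Set β) → Set β}
    (hf : ∀ n, ∀ t ∈ legalHistories σ n, f t ⊆ σ t ∧ (f t).Finite) (n : ℕ) :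
    responseHistory f n ∈ legalHistories σ n := by
  induction n with
  | zero => rfl
  | succ n ih => exact mem_biUnion ih ⟨_, hf n _ ih, rfl⟩

theorem exists_tendsto_legal_play_of_countable {σ : List (Set β) → Set β}
    (hσ : ∀ t, (σ t).Countable) :
    ∃ c : ℕ → List (Set β), ∀ 𝒱 : ℕ → Set β, (∀ k, 𝒱 k ⊆ σ (c k) ∧ (𝒱 k).Finite) →
      ∃ g : ℕ → ℕ, Tendsto g atTop atTop ∧
        ∀ n, 𝒱 (g n) ⊆ σ (List.ofFn fun i : Fin n => 𝒱 (g i)) := by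
  have hcount : (⋃ n, legalHistories σ n).Countable :=
    countable_iUnion (countable_legalHistories hσ)
  obtain ⟨c, hc⟩ := hcount.exists_eq_range ⟨[], mem_iUnion_of_mem 0 rfl⟩
  refine ⟨c, fun 𝒱 h𝒱 => ?_⟩
  set idx := Function.invFun c
  have hc_idx : ∀ n, ∀ t ∈ legalHistories σ n, c (idx t) = t := fun n t ht =>
    Function.invFun_eq (hc ▸ mem_iUnion_of_mem n ht : t ∈ range c)
  have hresponse : ∀ n, ∀ t ∈ legalHistories σ n, 𝒱 (idx t) ⊆ σ t ∧ (𝒱 (idx t)).Finite :=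
    fun n t ht => by simpa only [hc_idx n t ht] using h𝒱 (idx t)
  set hist := responseHistory fun t => 𝒱 (idx t)
  have hlegal : ∀ n, hist n ∈ legalHistories σ n :=
    responseHistory_mem_legalHistories hresponse
  refine ⟨fun n => idx (hist n), Function.Injective.nat_tendsto_atTop fun m n hmn => ?_,
    fun n => ?_⟩
  · have hhist : hist m = hist n := by
      rw [← hc_idx m _ (hlegal m), ← hc_idx n _ (hlegal n), hmn]
    simpa only [hist, length_responseHistory] using congrArg List.length hhist
  · rw [show (List.ofFn fun i : Fin n => 𝒱 (idx (hist i))) = hist n from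
      ofFn_responseHistory (fun t => 𝒱 (idx t)) n]
    exact (hresponse n _ (hlegal n)).1

end FiniteSelectionGame

lemma HurSel.comp_tendsto {𝔅 : BornologyOn X} {𝒱 : ℕ → Set (Set X)} (h : HurSel 𝔅 𝒱)
    {g : ℕ → ℕ} (hg : Tendsto g atTop atTop) : HurSel 𝔅 (𝒱 ∘ g) := by
  intro B hB
  obtain ⟨n₀, hn₀⟩ := h B hB
  obtain ⟨N, hN⟩ := eventually_atTop.mp (hg.eventually_ge_atTop n₀)
  exact ⟨N, fun n hn => hn₀ (g n) (hN n hn)⟩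

theorem BsHurewicz.not_oneWinsHurewicz {𝔅 : BornologyOn X} (hH : BsHurewicz 𝔅) :
    ¬ OneWinsHurewicz 𝔅 := by
  rintro ⟨σ, hσ, hwin⟩
  obtain ⟨c, hc⟩ := exists_tendsto_legal_play_of_countable fun t => (hσ t).1
  obtain ⟨𝒱, h𝒱, hsel⟩ := hH (σ ∘ c) fun k => hσ (c k)
  obtain ⟨g, hg, hlegal⟩ := hc 𝒱 h𝒱
  exact hwin (𝒱 ∘ g) (fun n => ⟨hlegal n, (h𝒱 (g n)).2⟩) (hsel.comp_tendsto hg)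

theorem bsHurewicz_of_not_oneWinsHurewicz {𝔅 : BornologyOn X} (h : ¬ OneWinsHurewicz 𝔅) :
    BsHurewicz 𝔅 := by
  intro 𝒰 h𝒰
  by_contra hcon
  refine h ⟨fun t => 𝒰 t.length, fun t => h𝒰 _, fun play hplay hsel => hcon ⟨play, ?_, hsel⟩⟩
  simpa using hplay

theorem stmt13_general (𝔅 : BornologyOn X) :
    BsHurewicz 𝔅 ↔ ¬ OneWinsHurewicz 𝔅 :=
  ⟨BsHurewicz.not_oneWinsHurewicz, bsHurewicz_of_not_oneWinsHurewicz⟩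

theorem stmt13 (𝔅 : BornologyOn X) (hcb : HasClosedBase 𝔅) :
    BsHurewicz 𝔅 ↔ ¬ OneWinsHurewicz 𝔅 :=
  stmt13_general 𝔅
end

section
/- Let 𝔅 be a bornology with closed base on a metric space X. If X is a γ_{𝔅ˢ}-set (i.e., satisfies S₁(𝒪_{𝔅ˢ}, Γ_{𝔅ˢ})), then X has the 𝔅ˢ-Hurewicz property. -/
open Set Metric Filter

variable {X : Type*} [MetricSpace X]

lemma exists_inj_subseq {α : Type*} (f : ℕ → α) (hf : (Set.range f).Infinite) :
    ∃ ν : ℕ → ℕ, (∀ k, k ≤ ν k) ∧ Function.Injective (f ∘ ν) := by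
  have key : ∀ N : ℕ, ∃ m, f m ∉ f '' (Set.Iic N) := by
    intro N
    by_contra hc
    push_neg at hc
    have : Set.range f ⊆ f '' (Set.Iic N) := by
      rintro _ ⟨m, rfl⟩; exact hc m
    exact hf (((Set.finite_Iic N).image f).subset this)
  let ν : ℕ → ℕ := fun k => Nat.rec 0 (fun _ p => (key p).choose) k
  have hstep : ∀ k, f (ν (k + 1)) ∉ f '' (Set.Iic (ν k)) := fun k => (key (ν k)).choose_spec
  have hmono : StrictMono ν := by
    apply strictMono_nat_of_lt_succ
    intro k
    by_contra hle
    push_neg at hle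
    exact hstep k ⟨ν (k + 1), hle, rfl⟩
  refine ⟨ν, fun k => hmono.le_apply, ?_⟩
  have hne : ∀ k l, k < l → f (ν k) ≠ f (ν l) := by
    intro k l hkl
    obtain ⟨j, rfl⟩ : ∃ j, l = j + 1 := ⟨l - 1, by omega⟩
    intro heq
    exact hstep j ⟨ν k, hmono.le_iff_le.mpr (by omega), heq⟩
  intro a b hab
  rcases lt_trichotomy a b with hl | he | hl
  · exact absurd hab (hne a b hl)
  · exact he
  · exact absurd hab.symm (hne b a hl)

theorem stmt14 (𝔅 : BornologyOn X) (hcb : HasClosedBase 𝔅)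
    (h : S1 (OBs 𝔅) (GBs 𝔅)) : BsHurewicz 𝔅 := by
  intro 𝒰 h𝒰
  -- the combined covers
  set 𝒲 : ℕ → Set (Set X) :=
    fun n => (fun g : Fin (n + 1) → Set X => ⋂ i, g i) '' (Set.pi Set.univ fun i => 𝒰 i)
    with h𝒲def
  have h𝒲mem : ∀ n, 𝒲 n ∈ OBs 𝔅 := by
    intro n
    obtain ⟨hcnt, hopen, hcov, hnuniv, hB⟩ := h𝒰 n
    refine ⟨?_, ?_, ?_, ?_, ?_⟩
    · -- countable
      apply Set.Countable.image
      exact Set.countable_univ_pi fun i => (h𝒰 i).1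
    · -- open
      rintro U ⟨g, hg, rfl⟩
      exact isOpen_iInter_of_finite fun i => ((h𝒰 i).2.1) _ (hg i (Set.mem_univ i))
    · -- covers
      intro x
      have hx : ∀ i : Fin (n + 1), ∃ U ∈ 𝒰 (i : ℕ), x ∈ U := fun i => (h𝒰 i).2.2.1 x
      choose g hg hxg using hx
      exact ⟨⋂ i, g i, ⟨g, fun i _ => hg i, rfl⟩, Set.mem_iInter.mpr hxg⟩
    · -- univ not a member
      rintro ⟨g, hg, hgu⟩
      have h0 : g 0 = Set.univ := by
        apply Set.eq_univ_of_univ_subset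
        calc Set.univ = ⋂ i, g i := hgu.symm
          _ ⊆ g 0 := Set.iInter_subset _ 0
      exact (h𝒰 0).2.2.2.1 (h0 ▸ hg 0 (Set.mem_univ 0))
    · -- B-cover
      intro B hBmem
      have hx : ∀ i : Fin (n + 1), ∃ U ∈ 𝒰 (i : ℕ), ∃ δ > 0, enlarge B δ ⊆ U :=
        fun i => (h𝒰 i).2.2.2.2 B hBmem
      choose g hg δ hδpos hδ using hx
      obtain ⟨i₀, -, hi₀⟩ := Set.exists_min_image Set.univ δ Set.finite_univ
        ⟨0, Set.mem_univ 0⟩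
      refine ⟨⋂ i, g i, ⟨g, fun i _ => hg i, rfl⟩, δ i₀, hδpos i₀, ?_⟩
      apply Set.subset_iInter
      intro i
      refine Set.Subset.trans ?_ (hδ i)
      intro y hy
      simp only [enlarge, Set.mem_iUnion] at hy ⊢
      obtain ⟨z, hz, hy⟩ := hy
      exact ⟨z, hz, ball_subset_ball (hi₀ i (Set.mem_univ i)) hy⟩
  obtain ⟨sel, hsel, hgbs⟩ := h 𝒲 h𝒲mem
  obtain ⟨-, hinf, -, hbad⟩ := hgbs
  choose g hg hgi using fun n => (hsel n : sel n ∈ 𝒲 n)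
  obtain ⟨ν, hν, hνinj⟩ := exists_inj_subseq sel hinf
  -- the selection
  refine ⟨fun j => {g (ν j) ⟨j, Nat.lt_succ_of_le (hν j)⟩}, fun j => ⟨?_, Set.finite_singleton _⟩, ?_⟩
  · intro U hU
    rw [Set.mem_singleton_iff] at hU
    subst hU
    exact hg (ν j) ⟨j, Nat.lt_succ_of_le (hν j)⟩ (Set.mem_univ _)
  · intro B hBmem
    have hFfin := hbad B hBmem
    have hpre : {j : ℕ | ¬ ∃ δ > 0, enlarge B δ ⊆ sel (ν j)}.Finite := by
      have : {j : ℕ | ¬ ∃ δ > 0, enlarge B δ ⊆ sel (ν j)} ⊆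
          (sel ∘ ν) ⁻¹' {U ∈ Set.range sel | ¬ ∃ δ > 0, enlarge B δ ⊆ U} := by
        intro j hj
        exact ⟨⟨ν j, rfl⟩, hj⟩
      exact (hFfin.preimage hνinj.injOn).subset this
    obtain ⟨n₀, hn₀⟩ := hpre.bddAbove
    refine ⟨n₀ + 1, fun n hn => ?_⟩
    have hngood : ∃ δ > 0, enlarge B δ ⊆ sel (ν n) := by
      by_contra hc
      have := hn₀ hc
      omega
    obtain ⟨δ, hδpos, hδ⟩ := hngood
    refine ⟨δ, hδpos, g (ν n) ⟨n, Nat.lt_succ_of_le (hν n)⟩, rfl, ?_⟩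
    refine hδ.trans ?_
    rw [← hgi (ν n)]
    exact Set.iInter_subset _ _
end
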